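/- Let $(M, g, u)$ be a static vacuum solution ($u\,\mathrm{Ric} = D^2 u$, $\Delta u = 0$) on a 3-manifold with boundary, and suppose $u \ge 0$ on $M$, $u(p) = 0$ at some boundary point $p \in \partial M$ where $p$ is a minimum of $u|_{\partial M}$, $u > 0$ in the interior, and the inward normal derivative satisfies $N(u)(p) > 0$ (Hopf boundary point lemma). Then the mean curvature of $\partial M$ at $p$ satisfies $H(p) \le 0$. -/

import Mathlib

/-!
Statement 8: for a static vacuum solution `(M, g, u)` with `u ≥ 0`, vanishing at a
boundary point `p` that is a minimum of `u|∂M`, with `u > 0` inside and positive inward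
normal derivative `N(u)(p) > 0` (Hopf boundary point lemma), the mean curvature of `∂M`
at `p` satisfies `H(p) ≤ 0`.
The manifold with boundary is represented in coordinates as the half-space
`M = {x ∈ ℝ³ : x₂ ≥ 0}` with boundary `∂M = {x₂ = 0}`; the metric is a coordinate
matrix field, curvature is given by the classical coordinate formulas, and the normal
derivative and boundary mean curvature are defined from `g` on the boundary.
-/

noncomputable section
open scoped BigOperators

/-- Partial derivative of `f` in the `i`-th coordinate direction at `p`. -/
def pd {n : ℕ} (f : (Fin n → ℝ) → ℝ) (i : Fin n) (p : Fin n → ℝ) : ℝ :=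
  fderiv ℝ f p (Pi.single i 1)

/-- Christoffel symbols `Γ^k_{ij}` of the metric `g` in coordinates. -/
def christoffel {n : ℕ} (g : (Fin n → ℝ) → Matrix (Fin n) (Fin n) ℝ) (k i j : Fin n)
    (p : Fin n → ℝ) : ℝ :=
  (1 / 2) * ∑ l, (g p)⁻¹ k l *
    (pd (fun q => g q i l) j p + pd (fun q => g q j l) i p - pd (fun q => g q i j) l p)

/-- Ricci curvature `R_{ij}` of `g` in coordinates. -/
def RicciC {n : ℕ} (g : (Fin n → ℝ) → Matrix (Fin n) (Fin n) ℝ) (i j : Fin n)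
    (p : Fin n → ℝ) : ℝ :=
  (∑ k, pd (fun q => christoffel g k i j q) k p)
    - (∑ k, pd (fun q => christoffel g k k j q) i p)
    + (∑ k, ∑ l, christoffel g k k l p * christoffel g l i j p)
    - (∑ k, ∑ l, christoffel g k i l p * christoffel g l k j p)

/-- Scalar curvature of `g` in coordinates. -/
def scalarC {n : ℕ} (g : (Fin n → ℝ) → Matrix (Fin n) (Fin n) ℝ) (p : Fin n → ℝ) : ℝ :=
  ∑ i, ∑ j, (g p)⁻¹ i j * RicciC g i j p

/-- Covariant Hessian `(D²u)_{ij}` of a function `u` with respect to `g`. -/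
def hessC {n : ℕ} (g : (Fin n → ℝ) → Matrix (Fin n) (Fin n) ℝ) (u : (Fin n → ℝ) → ℝ)
    (i j : Fin n) (p : Fin n → ℝ) : ℝ :=
  pd (fun q => pd u i q) j p - ∑ k, christoffel g k i j p * pd u k p

/-- Laplace–Beltrami operator `Δ_g u`. -/
def lapC {n : ℕ} (g : (Fin n → ℝ) → Matrix (Fin n) (Fin n) ℝ) (u : (Fin n → ℝ) → ℝ)
    (p : Fin n → ℝ) : ℝ :=
  ∑ i, ∑ j, (g p)⁻¹ i j * hessC g u i j p

/-- `g` is a smooth Riemannian metric in coordinates: symmetric, positive definite, smooth. -/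
def IsRiemMetric {n : ℕ} (g : (Fin n → ℝ) → Matrix (Fin n) (Fin n) ℝ) : Prop :=
  (∀ p, (g p).IsSymm) ∧ (∀ p, (g p).PosDef) ∧ ∀ i j, ContDiff ℝ (⊤ : ℕ∞) fun p => g p i j

/-- The half-space model of the manifold with boundary. -/
def Mset : Set (Fin 3 → ℝ) := {x | 0 ≤ x 2}
/-- Its boundary hypersurface. -/
def bdry : Set (Fin 3 → ℝ) := {x | x 2 = 0}

/-- Inward (into `{x₂ ≥ 0}`) unit normal derivative of `u` at the boundary with respect
to `g`: `N(u) = ⟨∇_g u, ∇_g x₂⟩ / |∇_g x₂|_g`. -/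
def nderiv (g : (Fin 3 → ℝ) → Matrix (Fin 3) (Fin 3) ℝ) (u : (Fin 3 → ℝ) → ℝ)
    (p : Fin 3 → ℝ) : ℝ :=
  (∑ i, (g p)⁻¹ i 2 * pd u i p) / Real.sqrt ((g p)⁻¹ 2 2)

/-- Second fundamental form of the boundary `{x₂ = 0}` with respect to the inward unit
normal: `A(v,w) = (D² x₂)(v,w) / |∇_g x₂|_g` on boundary-tangential directions. -/
def bdrySff (g : (Fin 3 → ℝ) → Matrix (Fin 3) (Fin 3) ℝ) (a b : Fin 2)
    (p : Fin 3 → ℝ) : ℝ :=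
  hessC g (fun x => x 2) a.castSucc b.castSucc p / Real.sqrt ((g p)⁻¹ 2 2)

/-- Mean curvature of the boundary `{x₂ = 0}` with respect to `g` and the inward unit
normal: the trace of the second fundamental form with respect to the induced boundary
metric `γ_{ab} = g_{ab}`, `a, b ∈ {0,1}`. -/
def bdryMeanCurv (g : (Fin 3 → ℝ) → Matrix (Fin 3) (Fin 3) ℝ) (p : Fin 3 → ℝ) : ℝ :=
  (g p 0 0 * bdrySff g 1 1 p + g p 1 1 * bdrySff g 0 0 p - 2 * g p 0 1 * bdrySff g 0 1 p) /
    (g p 0 0 * g p 1 1 - (g p 0 1) ^ 2)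


noncomputable section StaticAux

lemma second_deriv_nonneg_of_min {f : ℝ → ℝ} (hf0 : ContDiff ℝ (⊤ : ℕ∞) f)
    (hmin : ∀ t, f 0 ≤ f t) : 0 ≤ deriv (deriv f) 0 := by
  have hf : ContDiff ℝ ((⊤:ℕ∞):WithTop ℕ∞) f := hf0.of_le (by simp)
  by_contra h
  push_neg at h
  have hd' : Differentiable ℝ (deriv f) :=
    (contDiff_infty_iff_deriv.mp hf).2.differentiable (by simp)
  have hcont : Continuous (deriv (deriv f)) :=
    (contDiff_infty_iff_deriv.mp (contDiff_infty_iff_deriv.mp hf).2).2.continuous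
  have hev : ∀ᶠ t in nhds (0:ℝ), deriv (deriv f) t < 0 :=
    (hcont.continuousAt (x := 0)).eventually_lt_const h
  obtain ⟨δ, hδ, hball⟩ := Metric.eventually_nhds_iff.mp hev
  have habs : ∀ t : ℝ, |t| < δ → deriv (deriv f) t < 0 := by
    intro t ht; exact hball (by simpa [Real.dist_eq] using ht)
  have h0 : deriv f 0 = 0 :=
    (IsLocalMin.deriv_eq_zero (Filter.Eventually.of_forall hmin))
  have hanti : StrictAntiOn (deriv f) (Set.Icc (-(δ/2)) (δ/2)) := by
    apply strictAntiOn_of_deriv_neg (convex_Icc _ _) hd'.continuous.continuousOn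
    intro x hx
    rw [interior_Icc] at hx
    exact habs x (by rw [abs_lt]; constructor <;> nlinarith [hx.1, hx.2])
  have hpos : ∀ x ∈ Set.Ioo (-(δ/4)) (0:ℝ), 0 < deriv f x := by
    intro x hx
    have h1 : x ∈ Set.Icc (-(δ/2)) (δ/2) := by constructor <;> nlinarith [hx.1, hx.2]
    have h2 : (0:ℝ) ∈ Set.Icc (-(δ/2)) (δ/2) := by constructor <;> nlinarith
    have := hanti h1 h2 hx.2
    linarith [h0 ▸ this]
  have hmono : StrictMonoOn f (Set.Icc (-(δ/4)) 0) := by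
    apply strictMonoOn_of_deriv_pos (convex_Icc _ _)
      ((hf0.differentiable (by simp)).continuous.continuousOn)
    intro x hx
    rw [interior_Icc] at hx
    exact hpos x hx
  have : f (-(δ/4)) < f 0 := by
    apply hmono (by constructor <;> nlinarith) (by constructor <;> nlinarith) (by nlinarith)
  linarith [hmin (-(δ/4))]

lemma line_hasDerivAt (p v : Fin 3 → ℝ) (t : ℝ) :
    HasDerivAt (fun t : ℝ => p + t • v) v t := by
  simpa using ((hasDerivAt_id t).smul_const v).const_add p

lemma snd_deriv_line {u : (Fin 3 → ℝ) → ℝ} (hu : ContDiff ℝ (⊤ : ℕ∞) u) (p v : Fin 3 → ℝ) :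
    deriv (deriv (fun t : ℝ => u (p + t • v))) 0 = fderiv ℝ (fderiv ℝ u) p v v := by
  have hud : Differentiable ℝ u := hu.differentiable (by simp)
  have hfd : ContDiff ℝ (⊤ : ℕ∞) (fderiv ℝ u) := hu.fderiv_right (by simp)
  have h1 : ∀ t : ℝ, deriv (fun s : ℝ => u (p + s • v)) t = fderiv ℝ u (p + t • v) v :=
    fun t => ((hud _).hasFDerivAt.comp_hasDerivAt t (line_hasDerivAt p v t)).deriv
  have h2 : HasDerivAt (fun t : ℝ => fderiv ℝ u (p + t • v)) (fderiv ℝ (fderiv ℝ u) p v) 0 := by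
    have := (hfd.differentiable (by simp) (p + (0:ℝ) • v)).hasFDerivAt.comp_hasDerivAt 0
      (line_hasDerivAt p v 0)
    simpa [Function.comp_def] using this
  have h3 : HasDerivAt (fun t : ℝ => fderiv ℝ u (p + t • v) v)
      ((fderiv ℝ (fderiv ℝ u) p v) v) 0 :=
    (ContinuousLinearMap.apply ℝ ℝ v).hasFDerivAt.comp_hasDerivAt 0 h2
  have he : deriv (fun t : ℝ => u (p + t • v)) = fun t => fderiv ℝ u (p + t • v) v :=
    funext h1
  rw [he]
  exact h3.deriv

lemma pd_pd {u : (Fin 3 → ℝ) → ℝ} (hu : ContDiff ℝ (⊤ : ℕ∞) u) (p : Fin 3 → ℝ) (i j : Fin 3) :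
    pd (fun q => pd u i q) j p
      = fderiv ℝ (fderiv ℝ u) p (Pi.single j 1) (Pi.single i 1) := by
  have hfd : ContDiff ℝ (⊤ : ℕ∞) (fderiv ℝ u) := hu.fderiv_right (by simp)
  have hD : HasFDerivAt (fderiv ℝ u) (fderiv ℝ (fderiv ℝ u) p) p :=
    (hfd.differentiable (by simp) p).hasFDerivAt
  have h := (ContinuousLinearMap.apply ℝ ℝ ((Pi.single i 1 : Fin 3 → ℝ))).hasFDerivAt.comp p hD
  have he : pd (fun q => pd u i q) j p
      = fderiv ℝ (⇑(ContinuousLinearMap.apply ℝ ℝ ((Pi.single i 1 : Fin 3 → ℝ))) ∘ fderiv ℝ u)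
          p (Pi.single j 1) := rfl
  rw [he, h.fderiv]
  rfl

lemma fderiv2_symm {u : (Fin 3 → ℝ) → ℝ} (hu : ContDiff ℝ (⊤ : ℕ∞) u) (p v w : Fin 3 → ℝ) :
    fderiv ℝ (fderiv ℝ u) p v w = fderiv ℝ (fderiv ℝ u) p w v := by
  have hfd : ContDiff ℝ (⊤ : ℕ∞) (fderiv ℝ u) := hu.fderiv_right (by simp)
  exact second_derivative_symmetric (fun y => ((hu.differentiable (by simp)) y).hasFDerivAt)
    ((hfd.differentiable (by simp) p).hasFDerivAt) v w

lemma pd_coord (i : Fin 3) (q : Fin 3 → ℝ) :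
    pd (fun x : Fin 3 → ℝ => x 2) i q = (Pi.single i 1 : Fin 3 → ℝ) 2 := by
  have he : (fun x : Fin 3 → ℝ => x 2)
      = ⇑(ContinuousLinearMap.proj (R := ℝ) (φ := fun _ : Fin 3 => ℝ) 2) := rfl
  show fderiv ℝ (fun x : Fin 3 → ℝ => x 2) q (Pi.single i 1) = _
  rw [he, ContinuousLinearMap.fderiv]
  rfl

lemma hess_coord (g : (Fin 3 → ℝ) → Matrix (Fin 3) (Fin 3) ℝ) (i j : Fin 3) (p : Fin 3 → ℝ) :
    hessC g (fun x : Fin 3 → ℝ => x 2) i j p = - christoffel g 2 i j p := by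
  unfold hessC
  have h1 : (fun q => pd (fun x : Fin 3 → ℝ => x 2) i q)
      = fun _ => ((Pi.single i 1 : Fin 3 → ℝ) 2) := funext (pd_coord i)
  have h2 : pd (fun q => pd (fun x : Fin 3 → ℝ => x 2) i q) j p = 0 := by
    rw [h1]
    show fderiv ℝ (fun _ : Fin 3 → ℝ => ((Pi.single i 1 : Fin 3 → ℝ) 2)) p (Pi.single j 1) = 0
    rw [fderiv_fun_const]
    rfl
  rw [h2, Fin.sum_univ_three]
  simp only [pd_coord]
  simp [Pi.single_apply]

end StaticAux

set_option maxHeartbeats 1000000 in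
/-- Let `(M, g, u)` be a static vacuum solution (`u Ric = D²u`, `Δu = 0`)
on a 3-manifold with boundary, with `u ≥ 0` on `M`, `u(p) = 0` at a boundary point `p`
which is a minimum of `u|∂M`, `u > 0` in the interior, and inward normal derivative
`N(u)(p) > 0`. Then the mean curvature of `∂M` at `p` satisfies `H(p) ≤ 0`. -/
theorem static_vacuum_zero_boundary_point_mean_curvature
    (g : (Fin 3 → ℝ) → Matrix (Fin 3) (Fin 3) ℝ) (hg : IsRiemMetric g)
    (u : (Fin 3 → ℝ) → ℝ) (hu : ContDiff ℝ (⊤ : ℕ∞) u)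
    (hstatic : ∀ i j, ∀ p ∈ Mset, u p * RicciC g i j p = hessC g u i j p)
    (hharm : ∀ p ∈ Mset, lapC g u p = 0)
    (hunn : ∀ p ∈ Mset, 0 ≤ u p)
    (huint : ∀ p : Fin 3 → ℝ, 0 < p 2 → 0 < u p)
    (p : Fin 3 → ℝ) (hp : p ∈ bdry)
    (hup : u p = 0)
    (hmin : ∀ x ∈ bdry, u p ≤ u x)
    (hopf : 0 < nderiv g u p) :
    bdryMeanCurv g p ≤ 0 := by
  have hp2 : p 2 = 0 := hp
  have hpM : p ∈ Mset := le_of_eq hp2.symm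
  have hud : Differentiable ℝ u := hu.differentiable (by simp)
  have hhess : ∀ i j, hessC g u i j p = 0 := by
    intro i j
    have h := hstatic i j p hpM
    rw [hup, zero_mul] at h
    exact h.symm
  have htang : ∀ v : Fin 3 → ℝ, v 2 = 0 → ∀ t : ℝ, u p ≤ u (p + t • v) := by
    intro v hv t
    exact hmin _ (show (p + t • v) 2 = 0 by simp [hp2, hv])
  -- tangential first derivatives vanish
  have hgrad : ∀ v : Fin 3 → ℝ, v 2 = 0 → fderiv ℝ u p v = 0 := by
    intro v hv
    have hψ : HasDerivAt (fun t : ℝ => u (p + t • v)) (fderiv ℝ u (p + (0:ℝ) • v) v) 0 :=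
      (hud _).hasFDerivAt.comp_hasDerivAt 0 (line_hasDerivAt p v 0)
    have hlm : IsLocalMin (fun t : ℝ => u (p + t • v)) 0 := by
      apply Filter.Eventually.of_forall
      intro t
      simpa using htang v hv t
    have := hlm.hasDerivAt_eq_zero hψ
    simpa using this
  have hs0 : ((Pi.single 0 1 : Fin 3 → ℝ)) 2 = 0 := by simp [Pi.single_apply]
  have hs1 : ((Pi.single 1 1 : Fin 3 → ℝ)) 2 = 0 := by simp [Pi.single_apply]
  have pdu0 : pd u 0 p = 0 := hgrad _ hs0
  have pdu1 : pd u 1 p = 0 := hgrad _ hs1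
  set d2 : ℝ := pd u 2 p with hd2def
  -- second derivative nonnegativity in tangential directions
  have hsnd : ∀ v : Fin 3 → ℝ, v 2 = 0 → 0 ≤ fderiv ℝ (fderiv ℝ u) p v v := by
    intro v hv
    rw [← snd_deriv_line hu p v]
    apply second_deriv_nonneg_of_min
    · exact hu.comp (contDiff_const.add (contDiff_id.smul contDiff_const))
    · intro t
      simpa using htang v hv t
  set F := fderiv ℝ (fderiv ℝ u) p with hF
  set B00 : ℝ := F (Pi.single 0 1) (Pi.single 0 1) with hB00def
  set B11 : ℝ := F (Pi.single 1 1) (Pi.single 1 1) with hB11def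
  set B01 : ℝ := F (Pi.single 0 1) (Pi.single 1 1) with hB01def
  have hsymm01 : F (Pi.single 1 1) (Pi.single 0 1) = B01 := fderiv2_symm hu p _ _
  have hquad : ∀ x y : ℝ, 0 ≤ x^2 * B00 + 2*x*y*B01 + y^2 * B11 := by
    intro x y
    have hv2 : (x • (Pi.single 0 1 : Fin 3 → ℝ) + y • (Pi.single 1 1 : Fin 3 → ℝ)) 2 = 0 := by
      simp [Pi.single_apply]
    have h := hsnd _ hv2
    rw [map_add, map_smul, map_smul] at h
    simp only [ContinuousLinearMap.add_apply, ContinuousLinearMap.smul_apply, map_add,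
      map_smul, smul_eq_mul] at h
    rw [hsymm01, ← hB00def, ← hB11def, ← hB01def] at h
    nlinarith [h]
  have hB00 : 0 ≤ B00 := by have := hquad 1 0; linarith
  have hB11 : 0 ≤ B11 := by have := hquad 0 1; linarith
  have hdisc : B01^2 ≤ B00 * B11 := by
    have h : ∀ x : ℝ, 0 ≤ B00 * (x * x) + (2*B01) * x + B11 := by
      intro x
      have := hquad x 1
      nlinarith [this]
    have := discrim_le_zero h
    rw [discrim] at this
    nlinarith [this]
  -- christoffel relation from vanishing hessian
  have hΓ : ∀ i j : Fin 3, christoffel g 2 i j p * d2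
      = fderiv ℝ (fderiv ℝ u) p (Pi.single j 1) (Pi.single i 1) := by
    intro i j
    have h := hhess i j
    unfold hessC at h
    rw [Fin.sum_univ_three, pdu0, pdu1, pd_pd hu p i j] at h
    rw [← hF] at h ⊢
    linarith [h]
  -- positivity facts for g
  have hgp : (g p).PosDef := hg.2.1 p
  have hginv : ((g p)⁻¹).PosDef := hgp.inv
  have hdiag : ∀ (M : Matrix (Fin 3) (Fin 3) ℝ), M.PosDef → ∀ i : Fin 3, 0 < M i i := by
    intro M hM i
    have h := hM.dotProduct_mulVec_pos (x := Pi.single i 1) (by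
      intro hc
      have := congrFun hc i
      simp [Pi.single_apply] at this)
    simpa [dotProduct, Matrix.mulVec, Pi.single_apply, Finset.mul_sum,
      Finset.sum_ite_eq, Finset.sum_ite_eq'] using h
  have hinv22 : 0 < (g p)⁻¹ 2 2 := hdiag _ hginv 2
  have hg00 : 0 < g p 0 0 := hdiag _ hgp 0
  have hg11 : 0 < g p 1 1 := hdiag _ hgp 1
  have hgsym : g p 1 0 = g p 0 1 := (hg.1 p).apply 0 1
  set s : ℝ := Real.sqrt ((g p)⁻¹ 2 2) with hsdef
  have hspos : 0 < s := Real.sqrt_pos.mpr hinv22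
  -- positive normal derivative gives d2 > 0
  have hd2pos : 0 < d2 := by
    have h := hopf
    unfold nderiv at h
    rw [Fin.sum_univ_three, pdu0, pdu1] at h
    rw [← hsdef, ← hd2def] at h
    have hnum : 0 < (g p)⁻¹ 2 2 * d2 := by
      by_contra hc
      push_neg at hc
      have : ((g p)⁻¹ 0 2 * 0 + (g p)⁻¹ 1 2 * 0 + (g p)⁻¹ 2 2 * d2) / s ≤ 0 := by
        apply div_nonpos_of_nonpos_of_nonneg _ hspos.le
        linarith
      linarith
    nlinarith [hnum, hinv22]
  -- determinant of induced metric positive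
  have hgdet : 0 < g p 0 0 * g p 1 1 - (g p 0 1)^2 := by
    set x : Fin 3 → ℝ := fun i => if i = 0 then g p 1 1 else if i = 1 then -(g p 0 1) else 0
      with hxdef
    have hx0 : x ≠ 0 := by
      intro hc
      have := congrFun hc 0
      simp [hxdef] at this
      linarith
    have h := hgp.dotProduct_mulVec_pos hx0
    simp only [star_trivial] at h
    simp only [dotProduct, Matrix.mulVec, Fin.sum_univ_three, hxdef] at h
    norm_num [Fin.ext_iff] at h
    rw [hgsym] at h
    nlinarith [h, hg11]
  -- key trace inequality
  have hT : 0 ≤ g p 0 0 * B11 + g p 1 1 * B00 - 2 * g p 0 1 * B01 := by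
    have h1 : (2 * (g p 0 1) * B01)^2 ≤ (g p 1 1 * B00 + g p 0 0 * B11)^2 := by
      nlinarith [hdisc, hgdet, hB00, hB11, hg00, hg11, sq_nonneg (g p 1 1 * B00 - g p 0 0 * B11),
        mul_nonneg hB00 hB11, sq_nonneg (g p 0 1), sq_nonneg B01,
        mul_nonneg (mul_nonneg hg00.le hg11.le) (mul_nonneg hB00 hB11)]
    have h2 : 0 ≤ g p 1 1 * B00 + g p 0 0 * B11 :=
      add_nonneg (mul_nonneg hg11.le hB00) (mul_nonneg hg00.le hB11)
    nlinarith [h1, h2]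
  -- christoffel version of the trace inequality
  set c00 : ℝ := christoffel g 2 0 0 p with hc00
  set c11 : ℝ := christoffel g 2 1 1 p with hc11
  set c01 : ℝ := christoffel g 2 0 1 p with hc01
  have e00 : c00 * d2 = B00 := hΓ 0 0
  have e11 : c11 * d2 = B11 := hΓ 1 1
  have e01 : c01 * d2 = B01 := by rw [hc01, hΓ 0 1, ← hF, hsymm01]
  clear_value d2 F B00 B11 B01 s c00 c11 c01
  have hTc : 0 ≤ g p 0 0 * c11 + g p 1 1 * c00 - 2 * g p 0 1 * c01 := by
    by_contra hc
    push_neg at hc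
    have : (g p 0 0 * c11 + g p 1 1 * c00 - 2 * g p 0 1 * c01) * d2 < 0 :=
      mul_neg_of_neg_of_pos hc hd2pos
    rw [← e00, ← e11, ← e01] at hT
    nlinarith [this, hT]
  -- final assembly
  have hcast0 : ((0 : Fin 2).castSucc : Fin 3) = 0 := rfl
  have hcast1 : ((1 : Fin 2).castSucc : Fin 3) = 1 := rfl
  have hsff : ∀ a b : Fin 2, bdrySff g a b p
      = - christoffel g 2 a.castSucc b.castSucc p / s := by
    intro a b
    unfold bdrySff
    rw [hess_coord, ← hsdef]
  unfold bdryMeanCurv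
  rw [hsff 1 1, hsff 0 0, hsff 0 1, hcast0, hcast1]
  rw [← hc00, ← hc11, ← hc01]
  apply div_nonpos_of_nonpos_of_nonneg _ hgdet.le
  have hnum : g p 0 0 * (-c11 / s) + g p 1 1 * (-c00 / s) - 2 * g p 0 1 * (-c01 / s)
      = -((g p 0 0 * c11 + g p 1 1 * c00 - 2 * g p 0 1 * c01) / s) := by
    ring
  rw [hnum]
  exact neg_nonpos.mpr (div_nonneg hTc hspos.le)
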